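/- arXiv:math/0511514 — 4 statements merged into one kernel-verified Lean document; each statement's English description precedes it below -/
import Mathlib

section
/- Let 𝓕 = Hom_Λ(F,−) be pro-representable and Γ ⊆ Aut_Λ(F) a subgroup, with quotient functor 𝓓 = 𝓕/Γ. Then for all morphisms A → B ← C in Art, the natural map 𝓓(A ×_B C) → 𝓓(A) ×_{𝓓(B)} 𝓓(C) is surjective. -/
open IsLocalRing

universe u v

/-- An object of the category `Art` of Artinian local `Λ`-algebras with residue field
`k = Λ/m_Λ` (the augmentation is encoded by `resSurj`: every element is congruent to a
constant modulo the maximal ideal, so that `A/m_A ≅ k` canonically). -/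
structure ArtAlg (Λ : Type u) [CommRing Λ] [IsLocalRing Λ] : Type (u + 1) where
  carrier : Type u
  [cring : CommRing carrier]
  [alg : Algebra Λ carrier]
  [art : IsArtinianRing carrier]
  [loc : IsLocalRing carrier]
  [locHom : IsLocalHom (algebraMap Λ carrier)]
  resSurj : ∀ a : carrier, ∃ c : Λ, a - algebraMap Λ carrier c ∈ maximalIdeal carrier

attribute [instance] ArtAlg.cring ArtAlg.alg ArtAlg.art ArtAlg.loc ArtAlg.locHom

variable {Λ : Type u} [CommRing Λ] [IsLocalRing Λ]

/-- Morphisms in `Art`: local `Λ`-algebra homomorphisms (compatibility with the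
augmentations is then automatic). -/
structure ArtHom (A B : ArtAlg Λ) where
  toAlgHom : A.carrier →ₐ[Λ] B.carrier
  isLocal : IsLocalHom toAlgHom.toRingHom

def ArtHom.id (A : ArtAlg Λ) : ArtHom A A :=
  ⟨AlgHom.id Λ A.carrier, ⟨fun _ h => h⟩⟩

def ArtHom.comp {A B C : ArtAlg Λ} (g : ArtHom B C) (f : ArtHom A B) : ArtHom A C :=
  ⟨g.toAlgHom.comp f.toAlgHom, ⟨fun a h => f.isLocal.1 a (g.isLocal.1 (f.toAlgHom a) h)⟩⟩

/-- A covariant functor `Art → Sets`. -/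
structure ArtFunctor (Λ : Type u) [CommRing Λ] [IsLocalRing Λ] : Type (u + 1) where
  obj : ArtAlg Λ → Type u
  map : {A B : ArtAlg Λ} → ArtHom A B → obj A → obj B
  map_id : ∀ (A : ArtAlg Λ) (x : obj A), map (ArtHom.id A) x = x
  map_comp : ∀ {A B C : ArtAlg Λ} (f : ArtHom A B) (g : ArtHom B C) (x : obj A),
    map (g.comp f) x = map g (map f x)

/-- A natural transformation between functors `Art → Sets`. -/
structure ArtNatTrans (F G : ArtFunctor Λ) where
  app : ∀ A : ArtAlg Λ, F.obj A → G.obj A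
  naturality : ∀ {A B : ArtAlg Λ} (f : ArtHom A B) (x : F.obj A),
    app B (F.map f x) = G.map f (app A x)

/-- A complete Noetherian local `Λ`-algebra with residue field `k`,
a pro-representing object. -/
structure ProRepAlg (Λ : Type u) [CommRing Λ] [IsLocalRing Λ] : Type (u + 1) where
  carrier : Type u
  [cring : CommRing carrier]
  [alg : Algebra Λ carrier]
  [noeth : IsNoetherianRing carrier]
  [loc : IsLocalRing carrier]
  [locHom : IsLocalHom (algebraMap Λ carrier)]
  [complete : IsAdicComplete (maximalIdeal carrier) carrier]
  resSurj : ∀ a : carrier, ∃ c : Λ, a - algebraMap Λ carrier c ∈ maximalIdeal carrier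

attribute [instance] ProRepAlg.cring ProRepAlg.alg ProRepAlg.noeth ProRepAlg.loc
  ProRepAlg.locHom ProRepAlg.complete

/-- Local `Λ`-algebra homomorphisms `R → S`. -/
def LocHom (Λ : Type u) [CommRing Λ] (R S : Type u) [CommRing R] [CommRing S]
    [Algebra Λ R] [Algebra Λ S] [IsLocalRing R] [IsLocalRing S] : Type u :=
  {f : R →ₐ[Λ] S // IsLocalHom f.toRingHom}

/-- The pro-representable functor `h_F = Hom_Λ(F, -)`. -/
def hFunctor (F : ProRepAlg Λ) : ArtFunctor Λ where
  obj A := LocHom Λ F.carrier A.carrier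
  map {A B} f x := ⟨f.toAlgHom.comp x.1, ⟨fun a h => x.2.1 a (f.isLocal.1 (x.1 a) h)⟩⟩
  map_id A x := Subtype.ext (AlgHom.ext fun _ => rfl)
  map_comp f g x := Subtype.ext (AlgHom.ext fun _ => rfl)

/-- An algebra automorphism of `F`, as a ring hom, is a local homomorphism. -/
theorem AlgEquiv.isLocalHom_toRingHom {F : ProRepAlg Λ} (g : F.carrier ≃ₐ[Λ] F.carrier) :
    IsLocalHom ((g : F.carrier →ₐ[Λ] F.carrier).toRingHom) :=
  ⟨fun a h => by simpa using h.map g.symm.toAlgHom.toRingHom⟩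

/-- Precomposition of an element of `h_F(A) = Hom_Λ(F, A)` with a local endomorphism
`g : F → F`; this is the value on `A` of the natural transformation `h_F → h_F`
induced by `g`. -/
def precompEnd {F : ProRepAlg Λ} {A : ArtAlg Λ} (g : LocHom Λ F.carrier F.carrier)
    (z : (hFunctor F).obj A) : (hFunctor F).obj A :=
  ⟨z.1.comp g.1, ⟨fun a h => g.2.1 a (z.2.1 (g.1 a) h)⟩⟩

/-- Precomposition action of `Aut_Λ(F)` on `h_F(A) = Hom_Λ(F, A)`. -/
def precompAut {F : ProRepAlg Λ} {A : ArtAlg Λ} (g : F.carrier ≃ₐ[Λ] F.carrier)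
    (x : (hFunctor F).obj A) : (hFunctor F).obj A :=
  ⟨x.1.comp g.toAlgHom, ⟨fun a h => (AlgEquiv.isLocalHom_toRingHom g).1 a (x.2.1 _ h)⟩⟩

/-- The orbit equivalence relation of `Γ ⊆ Aut_Λ(F)` on `h_F(A)`. -/
def orbitSetoid (F : ProRepAlg Λ) (Γ : Subgroup (F.carrier ≃ₐ[Λ] F.carrier))
    (A : ArtAlg Λ) : Setoid ((hFunctor F).obj A) where
  r x y := ∃ g ∈ Γ, precompAut g x = y
  iseqv := by
    constructor
    · exact fun x => ⟨1, Γ.one_mem, Subtype.ext (AlgHom.ext fun a => rfl)⟩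
    · rintro x y ⟨g, hg, rfl⟩
      exact ⟨g⁻¹, Γ.inv_mem hg, Subtype.ext (AlgHom.ext fun a =>
        show x.1 (g (g.symm a)) = x.1 a by rw [g.apply_symm_apply])⟩
    · rintro x y z ⟨g, hg, rfl⟩ ⟨h, hh, rfl⟩
      exact ⟨g * h, Γ.mul_mem hg hh, Subtype.ext (AlgHom.ext fun a => rfl)⟩

/-- The quotient functor `𝓕/Γ`. -/
def quotFunctor (F : ProRepAlg Λ) (Γ : Subgroup (F.carrier ≃ₐ[Λ] F.carrier)) :
    ArtFunctor Λ where
  obj A := Quotient (orbitSetoid F Γ A)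
  map {A B} f := Quotient.map ((hFunctor F).map f) (by
    rintro x y ⟨g, hg, rfl⟩
    exact ⟨g, hg, Subtype.ext (AlgHom.ext fun a => rfl)⟩)
  map_id A := by
    rintro ⟨x⟩
    exact congrArg (Quotient.mk _) ((hFunctor F).map_id A x)
  map_comp f g := by
    rintro ⟨x⟩
    exact congrArg (Quotient.mk _) ((hFunctor F).map_comp f g x)

/-- The quotient map `q : 𝓕 → 𝓕/Γ`. -/
def quotMap (F : ProRepAlg Λ) (Γ : Subgroup (F.carrier ≃ₐ[Λ] F.carrier)) :
    ArtNatTrans (hFunctor F) (quotFunctor F Γ) where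
  app A := Quotient.mk _
  naturality f x := rfl

/-- Formal smoothness of a natural transformation `q : 𝓕 → 𝓓`: for every surjection
`π : A ↠ B` in `Art`, the induced map `𝓕(A) → 𝓕(B) ×_{𝓓(B)} 𝓓(A)` is surjective. -/
def FormallySmooth' {𝓕 𝓓 : ArtFunctor Λ} (q : ArtNatTrans 𝓕 𝓓) : Prop :=
  ∀ {A B : ArtAlg Λ} (π : ArtHom A B), Function.Surjective π.toAlgHom →
    ∀ (b : 𝓕.obj B) (d : 𝓓.obj A), q.app B b = 𝓓.map π d →
      ∃ a : 𝓕.obj A, 𝓕.map π a = b ∧ q.app A a = d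

/-- `A` is of the form `k[V]` for a `k`-vector space `V`: the maximal ideal is
square-zero and `m_Λ A = 0`. -/
def IsKV (A : ArtAlg Λ) : Prop :=
  maximalIdeal A.carrier ^ 2 = ⊥ ∧
    Ideal.map (algebraMap Λ A.carrier) (maximalIdeal Λ) = ⊥

/-- `A` is (isomorphic to) `k[ε] = k[t]/t²`: it is a `k[V]` with one-dimensional
maximal ideal. -/
def IsDualNumbers (A : ArtAlg Λ) : Prop :=
  IsKV A ∧ ∃ t : A.carrier, t ≠ 0 ∧ maximalIdeal A.carrier = Ideal.span {t}

/-- `𝓓` has a hull: a formally smooth natural transformation `h_F → 𝓓` which is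
bijective on all rings `k[V]`. -/
def HasHull (𝓓 : ArtFunctor Λ) : Prop :=
  ∃ (F : ProRepAlg Λ) (α : ArtNatTrans (hFunctor F) 𝓓), FormallySmooth' α ∧
    ∀ A : ArtAlg Λ, IsKV A → Function.Bijective (α.app A)

/-- `(R, p, q)` is the fibre product `A ×_B C` of `f : A → B` and `g : C → B`. -/
def IsFibreProduct {A B C R : ArtAlg Λ} (f : ArtHom A B) (g : ArtHom C B)
    (p : ArtHom R A) (q : ArtHom R C) : Prop :=
  (∀ r : R.carrier, f.toAlgHom (p.toAlgHom r) = g.toAlgHom (q.toAlgHom r)) ∧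
    ∀ (a : A.carrier) (c : C.carrier), f.toAlgHom a = g.toAlgHom c →
      ∃! r : R.carrier, p.toAlgHom r = a ∧ q.toAlgHom r = c

/-- `g` acts trivially on the tangent space `TF = Hom_k(m_F/(m_F² + m_Λ F), k)`,
i.e. it is the identity on the cotangent space `m_F/(m_F² + m_Λ F)`. -/
def ActsTriviallyOnTangent (F : ProRepAlg Λ) (g : F.carrier ≃ₐ[Λ] F.carrier) : Prop :=
  ∀ x ∈ maximalIdeal F.carrier,
    g x - x ∈ maximalIdeal F.carrier ^ 2 ⊔
      Ideal.map (algebraMap Λ F.carrier) (maximalIdeal Λ)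

/-! If classes `[x] ∈ 𝓓(A)` and `[y] ∈ 𝓓(C)` have equal images in `𝓓(B)`, then `f ∘ x ∘ γ = g ∘ y`
for some `γ ∈ Γ`. Replacing `x` by `x ∘ γ`, which has the same class, the pair `(x ∘ γ, y)` lifts
to `h_F(A ×_B C)` because `h_F` commutes with fibre products. -/

namespace IsFibreProduct

variable {A B C R : ArtAlg Λ} {f : ArtHom A B} {g : ArtHom C B} {p : ArtHom R A}
  {q : ArtHom R C}

theorem ext (hfib : IsFibreProduct f g p q) {r r' : R.carrier}
    (hp : p.toAlgHom r = p.toAlgHom r') (hq : q.toAlgHom r = q.toAlgHom r') : r = r' :=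
  (hfib.2 _ _ (hfib.1 r)).unique ⟨rfl, rfl⟩ ⟨hp.symm, hq.symm⟩

theorem exists_algHom_lift (hfib : IsFibreProduct f g p q) {S : Type*} [CommRing S]
    [Algebra Λ S] (φ : S →ₐ[Λ] A.carrier) (ψ : S →ₐ[Λ] C.carrier)
    (hφψ : f.toAlgHom.comp φ = g.toAlgHom.comp ψ) :
    ∃ z : S →ₐ[Λ] R.carrier, p.toAlgHom.comp z = φ ∧ q.toAlgHom.comp z = ψ := by
  choose z hz using fun s => (hfib.2 (φ s) (ψ s) (AlgHom.congr_fun hφψ s)).exists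
  refine ⟨{ toFun := z
            map_one' := hfib.ext (by simp [hz]) (by simp [hz])
            map_mul' := fun a b => hfib.ext (by simp [hz]) (by simp [hz])
            map_zero' := hfib.ext (by simp [hz]) (by simp [hz])
            map_add' := fun a b => hfib.ext (by simp [hz]) (by simp [hz])
            commutes' := fun c => hfib.ext (by simp [hz]) (by simp [hz]) }, ?_, ?_⟩ <;>
    ext s
  exacts [(hz s).1, (hz s).2]

end IsFibreProduct

theorem hFunctor_exists_map_eq_of_isFibreProduct (F : ProRepAlg Λ) {A B C R : ArtAlg Λ}
    {f : ArtHom A B} {g : ArtHom C B} {p : ArtHom R A} {q : ArtHom R C}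
    (hfib : IsFibreProduct f g p q) (x : (hFunctor F).obj A) (y : (hFunctor F).obj C)
    (hxy : (hFunctor F).map f x = (hFunctor F).map g y) :
    ∃ z : (hFunctor F).obj R, (hFunctor F).map p z = x ∧ (hFunctor F).map q z = y := by
  obtain ⟨z, hpz, hqz⟩ := hfib.exists_algHom_lift x.1 y.1 (congrArg Subtype.val hxy)
  have : IsLocalHom (p.toAlgHom.toRingHom.comp z.toRingHom) :=
    (hpz ▸ x.2 : IsLocalHom (p.toAlgHom.comp z).toRingHom)
  exact ⟨⟨z, isLocalHom_of_comp _ p.toAlgHom.toRingHom⟩, Subtype.ext hpz, Subtype.ext hqz⟩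

theorem orbitSetoid_mk_precompAut (F : ProRepAlg Λ) (Γ : Subgroup (F.carrier ≃ₐ[Λ] F.carrier))
    {A : ArtAlg Λ} {γ : F.carrier ≃ₐ[Λ] F.carrier} (hγ : γ ∈ Γ) (x : (hFunctor F).obj A) :
    (Quotient.mk (orbitSetoid F Γ A) (precompAut γ x)) = Quotient.mk _ x :=
  (Quotient.sound (show (orbitSetoid F Γ A).r x _ from ⟨γ, hγ, rfl⟩)).symm

theorem quotFunctor_fibreProduct_surjective_general {Λ : Type u} [CommRing Λ] [IsLocalRing Λ]
    (F : ProRepAlg Λ) (Γ : Subgroup (F.carrier ≃ₐ[Λ] F.carrier)) :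
    ∀ {A B C R : ArtAlg Λ} (f : ArtHom A B) (g : ArtHom C B)
      (p : ArtHom R A) (q : ArtHom R C), IsFibreProduct f g p q →
      ∀ (dA : (quotFunctor F Γ).obj A) (dC : (quotFunctor F Γ).obj C),
        (quotFunctor F Γ).map f dA = (quotFunctor F Γ).map g dC →
        ∃ dR : (quotFunctor F Γ).obj R, (quotFunctor F Γ).map p dR = dA ∧ (quotFunctor F Γ).map q dR = dC := by
  intro A B C R f g p q hfib dA dC hfg
  induction dA using Quotient.inductionOn with | h x => ?_
  induction dC using Quotient.inductionOn with | h y => ?_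
  obtain ⟨γ, hγ, hγxy⟩ := Quotient.exact hfg
  obtain ⟨z, hpz, hqz⟩ :=
    hFunctor_exists_map_eq_of_isFibreProduct F hfib (precompAut γ x) y hγxy
  exact ⟨Quotient.mk _ z, (congrArg (Quotient.mk _) hpz).trans
    (orbitSetoid_mk_precompAut F Γ hγ x), congrArg (Quotient.mk _) hqz⟩

/-- For `𝓓 = 𝓕/Γ`, the map `𝓓(A ×_B C) → 𝓓(A) ×_{𝓓(B)} 𝓓(C)`
is surjective. -/
theorem quotFunctor_fibreProduct_surjective {Λ : Type u} [CommRing Λ] [IsLocalRing Λ] [IsNoetherianRing Λ]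
    [IsAdicComplete (maximalIdeal Λ) Λ]
    (F : ProRepAlg Λ) (Γ : Subgroup (F.carrier ≃ₐ[Λ] F.carrier)) :
    ∀ {A B C R : ArtAlg Λ} (f : ArtHom A B) (g : ArtHom C B)
      (p : ArtHom R A) (q : ArtHom R C), IsFibreProduct f g p q →
      ∀ (dA : (quotFunctor F Γ).obj A) (dC : (quotFunctor F Γ).obj C),
        (quotFunctor F Γ).map f dA = (quotFunctor F Γ).map g dC →
        ∃ dR : (quotFunctor F Γ).obj R, (quotFunctor F Γ).map p dR = dA ∧ (quotFunctor F Γ).map q dR = dC :=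
  quotFunctor_fibreProduct_surjective_general F Γ
end

section
/- Let F be a complete Noetherian local Λ-algebra, 𝓕 = Hom_Λ(F,−), and Γ ⊆ Aut_Λ(F). Suppose Γ acts nontrivially on the tangent space TF = Hom_k(m_F/(m_F² + m_Λ F), k). Then the quotient functor 𝓓 = 𝓕/Γ fails to have a tangent space: writing V = 𝓕(k[ε]) (with ε² = 0) and k[ε₁,ε₂] = k[t₁,t₂]/(t₁²,t₂²,t₁t₂), the natural map 𝓓(k[ε₁,ε₂]) → 𝓓(k[ε]) × 𝓓(k[ε]) is not injective. In particular 𝓓 does not have a hull. -/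
open IsLocalRing

universe u v

variable {Λ : Type u} [CommRing Λ] [IsLocalRing Λ]

/-!
If `g ∈ Γ` does not act trivially on `m_F/(m_F² + m_Λ F)`, a `Λ`-linear functional `ψ` on this
cotangent space with `ψ(g x - x) = 1` gives a tangent vector `v : F → k[ε]`,
`a ↦ ā + ψ(a) ε`, with `v ∘ g ≠ v`. In `𝓕(k[ε₁,ε₂]) = 𝓕(k[ε]) ×_{𝓕(k)} 𝓕(k[ε])` the points
`(v, v)` and `(v, v ∘ g)` then have the same image in `𝓓(k[ε]) × 𝓓(k[ε])`, but since `Γ` acts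
diagonally they lie in different orbits. A hull `h_G → 𝓓` is bijective on `k`, `k[ε]` and
`k[ε₁,ε₂]`, and `h_G` takes this fibre product to a fibre product, so it would force injectivity.
-/

theorem Submodule.exists_linearMap_quotient_eq_one {R M : Type*} [CommRing R] [AddCommGroup M]
    [Module R M] {I : Ideal R} [I.IsMaximal] {N : Submodule R M}
    (hN : I • (⊤ : Submodule R M) ≤ N) {y : M} (hy : y ∉ N) :
    ∃ ψ : M →ₗ[R] R ⧸ I, (∀ x ∈ N, ψ x = 0) ∧ ψ y = 1 := by
  have htor : Module.IsTorsionBySet R (M ⧸ N) I := by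
    rw [Module.isTorsionBySet_quotient_iff]
    exact fun x r hr => hN (Submodule.smul_mem_smul hr trivial)
  let _ := Ideal.Quotient.field I
  let _ := htor.module
  obtain ⟨f, hf⟩ := Module.Projective.exists_dual_eq_one (R ⧸ I) (x := N.mkQ y)
    (by simpa using hy)
  exact ⟨(f.restrictScalars R).comp N.mkQ,
    fun x hx => by simp [(Submodule.Quotient.mk_eq_zero N).2 hx], hf⟩

section Tangent

variable {R : Type*} [CommRing R] [IsLocalRing R] [Algebra Λ R] [IsLocalHom (algebraMap Λ R)]

theorem exists_linearMap_residueField_of_notMem_sq_sup_map {y : R}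
    (hy : y ∈ maximalIdeal R)
    (hyI : y ∉ maximalIdeal R ^ 2 ⊔ (maximalIdeal Λ).map (algebraMap Λ R)) :
    ∃ ψ : R →ₗ[Λ] ResidueField Λ,
      ψ 1 = 0 ∧ (∀ a ∈ maximalIdeal R ^ 2, ψ a = 0) ∧ ψ y = 1 := by
  set I := maximalIdeal R ^ 2 ⊔ (maximalIdeal Λ).map (algebraMap Λ R)
  set N : Submodule Λ R := I.restrictScalars Λ ⊔ Submodule.span Λ {1}
  have hN : maximalIdeal Λ • (⊤ : Submodule Λ R) ≤ N := by
    refine Submodule.smul_le.2 fun c hc a _ => Submodule.mem_sup_left ?_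
    rw [Submodule.restrictScalars_mem, Algebra.smul_def]
    exact Ideal.mem_sup_right (Ideal.mul_mem_right _ _ (Ideal.mem_map_of_mem _ hc))
  have hyN : y ∉ N := by
    rintro hyN
    obtain ⟨i, hi, _, hc, rfl⟩ := Submodule.mem_sup.1 hyN
    obtain ⟨c, rfl⟩ := Submodule.mem_span_singleton.1 hc
    rw [Algebra.smul_def, mul_one] at hy hyI
    have hIR : I ≤ maximalIdeal R := sup_le (Ideal.pow_le_self two_ne_zero) (map_maximalIdeal_le _)
    have hiR : i ∈ maximalIdeal R := hIR hi
    have hcΛ : c ∈ maximalIdeal Λ := by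
      rw [← maximalIdeal_comap (algebraMap Λ R), Ideal.mem_comap]
      simpa using sub_mem hy hiR
    exact hyI (add_mem hi (Ideal.mem_sup_right (Ideal.mem_map_of_mem _ hcΛ)))
  obtain ⟨ψ, hψN, hψy⟩ := Submodule.exists_linearMap_quotient_eq_one hN hyN
  exact ⟨ψ, hψN 1 (Submodule.mem_sup_right (Submodule.mem_span_singleton_self 1)),
    fun a ha => hψN a (Submodule.mem_sup_left (Ideal.mem_sup_left ha)), hψy⟩

/-- The homomorphism is `a ↦ ā + δ a`, where `ā ∈ Λ` lifts the residue class of `a`; it is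
multiplicative because `δ` kills `1` and `m_R²` and `δ a * δ b = 0`. -/
theorem exists_algHom_eq_of_linearMap {E : Type*} [CommRing E] [Algebra Λ E]
    (hres : ∀ a : R, ∃ c : Λ, a - algebraMap Λ R c ∈ maximalIdeal R)
    (hE : ∀ c ∈ maximalIdeal Λ, algebraMap Λ E c = 0) (δ : R →ₗ[Λ] E) (hδ1 : δ 1 = 0)
    (hδm : ∀ a ∈ maximalIdeal R, ∀ b ∈ maximalIdeal R, δ (a * b) = 0)
    (hδδ : ∀ a b, δ a * δ b = 0) :
    ∃ v : R →ₐ[Λ] E, ∀ a ∈ maximalIdeal R, v a = δ a := by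
  choose c hc using hres
  have const_eq : ∀ a d, a - algebraMap Λ R d ∈ maximalIdeal R →
      algebraMap Λ E (c a) = algebraMap Λ E d := by
    intro a d hd
    rw [← sub_eq_zero, ← map_sub]
    refine hE _ ?_
    rw [← maximalIdeal_comap (algebraMap Λ R), Ideal.mem_comap, map_sub]
    simpa using sub_mem hd (hc a)
  have δ_algebraMap : ∀ d, δ (algebraMap Λ R d) = 0 := fun d => by
    rw [Algebra.algebraMap_eq_smul_one, map_smul, hδ1, smul_zero]
  have δ_mul : ∀ a b, δ (a * b) = algebraMap Λ E (c a) * δ b + algebraMap Λ E (c b) * δ a := by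
    intro a b
    have hab : a * b = algebraMap Λ R (c a) * b + algebraMap Λ R (c b) * (a - algebraMap Λ R (c a))
        + (a - algebraMap Λ R (c a)) * (b - algebraMap Λ R (c b)) := by ring
    rw [hab, map_add, map_add, hδm _ (hc a) _ (hc b), ← Algebra.smul_def, ← Algebra.smul_def,
      map_smul, map_smul, map_sub, δ_algebraMap, sub_zero, add_zero, Algebra.smul_def,
      Algebra.smul_def]
  refine ⟨{ toFun := fun a => algebraMap Λ E (c a) + δ a
            map_one' := by simp [const_eq 1 1 (by simp), hδ1]
            map_mul' := fun a b => ?_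
            map_zero' := by simp [const_eq 0 0 (by simp)]
            map_add' := fun a b => ?_
            commutes' := fun d => by simp [const_eq (algebraMap Λ R d) d (by simp), δ_algebraMap] },
    fun a ha => by simp [const_eq a 0 (by simpa using ha)]⟩
  · have hmem : a * b - algebraMap Λ R (c a * c b) ∈ maximalIdeal R := by
      have : a * b - algebraMap Λ R (c a * c b) = (a - algebraMap Λ R (c a)) * b
          + algebraMap Λ R (c a) * (b - algebraMap Λ R (c b)) := by rw [map_mul]; ring
      rw [this]
      exact add_mem (Ideal.mul_mem_right _ _ (hc a)) (Ideal.mul_mem_left _ _ (hc b))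
    rw [const_eq _ _ hmem, δ_mul, map_mul]
    linear_combination -hδδ a b
  · have hmem : a + b - algebraMap Λ R (c a + c b) ∈ maximalIdeal R := by
      rw [map_add, add_sub_add_comm]
      exact add_mem (hc a) (hc b)
    rw [const_eq _ _ hmem, map_add, map_add]
    ring

end Tangent

theorem exists_precompAut_ne (F : ProRepAlg Λ) {E : ArtAlg Λ} (hE : IsDualNumbers E)
    {g : F.carrier ≃ₐ[Λ] F.carrier} (hg : ¬ ActsTriviallyOnTangent F g) :
    ∃ v : (hFunctor F).obj E, precompAut g v ≠ v := by
  obtain ⟨⟨hm2, hmΛ⟩, t, ht0, hspan⟩ := hE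
  simp only [ActsTriviallyOnTangent, not_forall] at hg
  obtain ⟨x, hx, hgx⟩ := hg
  have hgxm : g x - x ∈ maximalIdeal F.carrier :=
    sub_mem (map_nonunit (g : F.carrier →+* F.carrier) x hx) hx
  obtain ⟨ψ, hψ1, hψsq, hψy⟩ := exists_linearMap_residueField_of_notMem_sq_sup_map hgxm hgx
  have hE : ∀ c ∈ maximalIdeal Λ, algebraMap Λ E.carrier c = 0 := fun c hc => by
    simpa [hmΛ] using Ideal.mem_map_of_mem (algebraMap Λ E.carrier) hc
  have ht : t ∈ maximalIdeal E.carrier := hspan ▸ Ideal.mem_span_singleton_self t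
  have htt : t * t = 0 := by
    simpa [← pow_two, hm2] using Ideal.mul_mem_mul ht ht
  let μ : ResidueField Λ →ₐ[Λ] E.carrier :=
    Ideal.Quotient.liftₐ (maximalIdeal Λ) (Algebra.ofId Λ E.carrier) hE
  let δ := LinearMap.mulRight Λ t ∘ₗ μ.toLinearMap ∘ₗ ψ
  have hδ : ∀ a, δ a = μ (ψ a) * t := fun _ => rfl
  obtain ⟨v, hv⟩ := exists_algHom_eq_of_linearMap F.resSurj hE δ (by simp [hδ, hψ1])
    (fun a ha b hb => by simp [hδ, hψsq _ (pow_two (maximalIdeal F.carrier) ▸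
      Ideal.mul_mem_mul ha hb)])
    (fun a b => by rw [hδ, hδ, mul_mul_mul_comm, htt, mul_zero])
  have hvm : ∀ a ∈ maximalIdeal F.carrier, v a ∈ maximalIdeal E.carrier := fun a ha => by
    rw [hv a ha, hδ]
    exact Ideal.mul_mem_left _ _ ht
  have hvloc : IsLocalHom v.toRingHom := ((local_hom_TFAE v.toRingHom).out 3 0).1 hvm
  refine ⟨⟨v, hvloc⟩, fun h => ht0 ?_⟩
  have hvg : v (g x) = v x := congrArg (fun z : (hFunctor F).obj E => z.1 x) h
  rw [← sub_eq_zero.2 hvg, ← map_sub, hv _ hgxm, hδ, hψy, map_one, one_mul]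

theorem hFunctor_obj_subsingleton (F : ProRepAlg Λ) {K : ArtAlg Λ}
    (hK : maximalIdeal K.carrier = ⊥) : Subsingleton ((hFunctor F).obj K) := by
  have hconst : ∀ (z : (hFunctor F).obj K) (a : F.carrier) (c : Λ),
      a - algebraMap Λ F.carrier c ∈ maximalIdeal F.carrier → z.1 a = algebraMap Λ K.carrier c := by
    intro z a c hc
    have := z.2
    simpa [hK, sub_eq_zero] using map_nonunit z.1.toRingHom _ hc
  refine ⟨fun z z' => Subtype.ext (AlgHom.ext fun a => ?_)⟩
  obtain ⟨c, hc⟩ := F.resSurj a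
  rw [hconst z a c hc, hconst z' a c hc]

theorem precompAut_hFunctor_map {F : ProRepAlg Λ} {A B : ArtAlg Λ} (f : ArtHom A B)
    (g : F.carrier ≃ₐ[Λ] F.carrier) (z : (hFunctor F).obj A) :
    (hFunctor F).map f (precompAut g z) = precompAut g ((hFunctor F).map f z) :=
  rfl

namespace IsFibreProduct

variable {A B C R : ArtAlg Λ} {f : ArtHom A B} {g : ArtHom C B} {p : ArtHom R A}
  {q : ArtHom R C}

theorem exists_hFunctor_map_eq (hFP : IsFibreProduct f g p q) {F : ProRepAlg Λ}
    {x : (hFunctor F).obj A} {y : (hFunctor F).obj C}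
    (hxy : (hFunctor F).map f x = (hFunctor F).map g y) :
    ∃ z : (hFunctor F).obj R, (hFunctor F).map p z = x ∧ (hFunctor F).map q z = y := by
  have hex : ∀ a, ∃! r, p.toAlgHom r = x.1 a ∧ q.toAlgHom r = y.1 a := fun a =>
    hFP.2 _ _ (congrArg (fun z : (hFunctor F).obj B => z.1 a) hxy)
  choose w hw hw_unique using hex
  have eq_w : ∀ a r, p.toAlgHom r = x.1 a → q.toAlgHom r = y.1 a → r = w a :=
    fun a r h1 h2 => hw_unique a r ⟨h1, h2⟩
  let wₐ : F.carrier →ₐ[Λ] R.carrier :=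
    { toFun := w
      map_one' := (eq_w 1 1 (by simp) (by simp)).symm
      map_mul' := fun a b => (eq_w _ _ (by simp [(hw a).1, (hw b).1])
        (by simp [(hw a).2, (hw b).2])).symm
      map_zero' := (eq_w 0 0 (by simp) (by simp)).symm
      map_add' := fun a b => (eq_w _ _ (by simp [(hw a).1, (hw b).1])
        (by simp [(hw a).2, (hw b).2])).symm
      commutes' := fun c => (eq_w _ _ (by simp) (by simp)).symm }
  have hloc : IsLocalHom wₐ.toRingHom :=
    ⟨fun a ha => x.2.1 a (by simpa [wₐ, (hw a).1] using ha.map p.toAlgHom)⟩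
  exact ⟨⟨wₐ, hloc⟩, Subtype.ext (AlgHom.ext fun a => (hw a).1),
    Subtype.ext (AlgHom.ext fun a => (hw a).2)⟩

theorem hFunctor_map_injective (hFP : IsFibreProduct f g p q) {F : ProRepAlg Λ}
    {z z' : (hFunctor F).obj R} (hp : (hFunctor F).map p z = (hFunctor F).map p z')
    (hq : (hFunctor F).map q z = (hFunctor F).map q z') : z = z' := by
  refine Subtype.ext (AlgHom.ext fun a => ?_)
  have hp' := congrArg (fun u : (hFunctor F).obj A => u.1 a) hp
  have hq' := congrArg (fun u : (hFunctor F).obj C => u.1 a) hq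
  exact (hFP.2 _ _ (hFP.1 (z.1 a))).unique ⟨rfl, rfl⟩ ⟨hp'.symm, hq'.symm⟩

end IsFibreProduct

theorem HasHull.injective_of_isFibreProduct {𝓓 : ArtFunctor Λ} (h𝓓 : HasHull 𝓓)
    {A B C R : ArtAlg Λ} {f : ArtHom A B} {g : ArtHom C B} {p : ArtHom R A} {q : ArtHom R C}
    (hFP : IsFibreProduct f g p q) (hA : IsKV A) (hC : IsKV C) (hR : IsKV R) :
    Function.Injective (fun d : 𝓓.obj R => (𝓓.map p d, 𝓓.map q d)) := by
  obtain ⟨F, α, -, hα⟩ := h𝓓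
  intro d d' hdd'
  obtain ⟨z, rfl⟩ := (hα R hR).2 d
  obtain ⟨z', rfl⟩ := (hα R hR).2 d'
  simp only [Prod.mk.injEq, ← α.naturality] at hdd'
  exact congrArg (α.app R) (hFP.hFunctor_map_injective ((hα A hA).1 hdd'.1) ((hα C hC).1 hdd'.2))

theorem not_injective_quotFunctor_of_isFibreProduct {F : ProRepAlg Λ}
    {Γ : Subgroup (F.carrier ≃ₐ[Λ] F.carrier)} (hnt : ∃ g ∈ Γ, ¬ ActsTriviallyOnTangent F g)
    {K E E2 : ArtAlg Λ} {πE : ArtHom E K} {p1 p2 : ArtHom E2 E}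
    (hK : maximalIdeal K.carrier = ⊥) (hE : IsDualNumbers E) (hFP : IsFibreProduct πE πE p1 p2) :
    ¬ Function.Injective (fun d : (quotFunctor F Γ).obj E2 =>
      ((quotFunctor F Γ).map p1 d, (quotFunctor F Γ).map p2 d)) := by
  obtain ⟨g, hgΓ, hg⟩ := hnt
  obtain ⟨v, hv⟩ := exists_precompAut_ne F hE hg
  have := hFunctor_obj_subsingleton F hK
  obtain ⟨w, hw1, hw2⟩ := hFP.exists_hFunctor_map_eq (x := v) (y := precompAut g v)
    (Subsingleton.elim _ _)
  obtain ⟨w₀, hw₀1, hw₀2⟩ := hFP.exists_hFunctor_map_eq (x := v) (y := v) rfl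
  intro hinj
  have hclasses : ((quotFunctor F Γ).map p1 ⟦w₀⟧, (quotFunctor F Γ).map p2 ⟦w₀⟧) =
      ((quotFunctor F Γ).map p1 ⟦w⟧, (quotFunctor F Γ).map p2 ⟦w⟧) :=
    Prod.ext (congrArg (Quotient.mk _) (hw₀1.trans hw1.symm))
      (Quotient.sound ⟨g, hgΓ, by rw [hw₀2, hw2]⟩)
  obtain ⟨h, -, hhw₀⟩ := Quotient.exact (hinj hclasses)
  have hh1 := congrArg ((hFunctor F).map p1) hhw₀
  have hh2 := congrArg ((hFunctor F).map p2) hhw₀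
  rw [precompAut_hFunctor_map, hw₀1, hw1] at hh1
  rw [precompAut_hFunctor_map, hw₀2, hw2, hh1] at hh2
  exact hv hh2.symm

namespace TrivSqZeroExt

variable {R M : Type*} [AddCommGroup M]

instance isLocalRing [CommRing R] [IsLocalRing R] [Module R M] [Module Rᵐᵒᵖ M]
    [IsCentralScalar R M] : IsLocalRing (TrivSqZeroExt R M) :=
  IsLocalRing.of_isUnit_or_isUnit_one_sub_self fun a => by
    simpa [isUnit_iff_isUnit_fst] using IsLocalRing.isUnit_or_isUnit_one_sub_self a.fst

theorem maximalIdeal_eq_kerIdeal [Field R] [Module R M] [Module Rᵐᵒᵖ M] [IsCentralScalar R M] :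
    maximalIdeal (TrivSqZeroExt R M) = kerIdeal R M := by
  ext x
  simp [kerIdeal, mem_maximalIdeal, mem_nonunits_iff, isUnit_iff_isUnit_fst]

end TrivSqZeroExt

section SquareZero

open TrivSqZeroExt

instance : IsLocalHom (algebraMap Λ (ResidueField Λ)) :=
  IsLocalHom.of_surjective _ residue_surjective

variable (Λ) in
noncomputable def ArtAlg.residueField : ArtAlg Λ where
  carrier := ResidueField Λ
  resSurj a := by
    obtain ⟨c, rfl⟩ := residue_surjective a
    exact ⟨c, by simp [ResidueField.algebraMap_eq]⟩

variable (M N : Type u)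
  [AddCommGroup M] [Module (ResidueField Λ) M] [Module (ResidueField Λ)ᵐᵒᵖ M]
  [IsCentralScalar (ResidueField Λ) M] [Module Λ M] [IsScalarTower Λ (ResidueField Λ) M]
  [IsScalarTower Λ (ResidueField Λ)ᵐᵒᵖ M] [Module.Finite (ResidueField Λ) M]
  [AddCommGroup N] [Module (ResidueField Λ) N] [Module (ResidueField Λ)ᵐᵒᵖ N]
  [IsCentralScalar (ResidueField Λ) N] [Module Λ N] [IsScalarTower Λ (ResidueField Λ) N]
  [IsScalarTower Λ (ResidueField Λ)ᵐᵒᵖ N] [Module.Finite (ResidueField Λ) N]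

instance : Module.Finite (ResidueField Λ) (TrivSqZeroExt (ResidueField Λ) M) :=
  inferInstanceAs (Module.Finite (ResidueField Λ) (ResidueField Λ × M))

instance : IsLocalHom (algebraMap Λ (TrivSqZeroExt (ResidueField Λ) M)) :=
  ⟨fun c hc => isUnit_of_map_unit (algebraMap Λ (ResidueField Λ)) c (isUnit_iff_isUnit_fst.1 hc)⟩

variable (Λ) in
/-- The ring `k[M] = k ⊕ M` with `M² = 0`; thus `k[ε] = k[k]` and `k[ε₁,ε₂] = k[k × k]`. -/
noncomputable def ArtAlg.trivSqZeroExt : ArtAlg Λ where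
  carrier := TrivSqZeroExt (ResidueField Λ) M
  art := IsArtinianRing.of_finite (ResidueField Λ) _
  resSurj a := by
    obtain ⟨c, hc⟩ := residue_surjective a.fst
    exact ⟨c, by simp [maximalIdeal_eq_kerIdeal, kerIdeal, algebraMap_eq_inl',
      ResidueField.algebraMap_eq, hc]⟩

variable (Λ) in
noncomputable def ArtHom.fst : ArtHom (ArtAlg.trivSqZeroExt Λ M) (ArtAlg.residueField Λ) :=
  ⟨fstHom Λ (ResidueField Λ) M, ⟨fun _ ha => isUnit_iff_isUnit_fst.2 ha⟩⟩

variable {M N} in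
noncomputable def ArtHom.trivSqZeroExtMap (φ : M →ₗ[ResidueField Λ] N) :
    ArtHom (ArtAlg.trivSqZeroExt Λ M) (ArtAlg.trivSqZeroExt Λ N) :=
  ⟨(TrivSqZeroExt.map φ).restrictScalars Λ,
    ⟨fun (a : TrivSqZeroExt _ M) (ha : IsUnit (TrivSqZeroExt.map φ a)) =>
      isUnit_iff_isUnit_fst.2 (by simpa [isUnit_iff_isUnit_fst] using ha)⟩⟩

theorem isKV_trivSqZeroExt : IsKV (ArtAlg.trivSqZeroExt Λ M) := by
  have hmax := maximalIdeal_eq_kerIdeal (R := ResidueField Λ) (M := M)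
  refine ⟨hmax ▸ kerIdeal_sq _ _, (Ideal.map_eq_bot_iff_le_ker _).2 fun c hc => ?_⟩
  rw [RingHom.mem_ker]
  change inl (algebraMap Λ (ResidueField Λ) c) = 0
  rw [ResidueField.algebraMap_eq, (residue_eq_zero_iff c).2 hc, inl_zero]
  rfl

theorem isDualNumbers_trivSqZeroExt :
    IsDualNumbers (ArtAlg.trivSqZeroExt Λ (ResidueField Λ)) :=
  ⟨isKV_trivSqZeroExt _, (DualNumber.eps : DualNumber (ResidueField Λ)),
    show (DualNumber.eps : DualNumber (ResidueField Λ)) ≠ 0 from fun h => by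
      simpa using congrArg snd h,
    DualNumber.maximalIdeal_eq_span_singleton_eps⟩

theorem isFibreProduct_trivSqZeroExt :
    IsFibreProduct (ArtHom.fst Λ M) (ArtHom.fst Λ N)
      (ArtHom.trivSqZeroExtMap (LinearMap.fst (ResidueField Λ) M N))
      (ArtHom.trivSqZeroExtMap (LinearMap.snd (ResidueField Λ) M N)) := by
  refine ⟨fun (r : TrivSqZeroExt _ (M × N)) =>
    show (map (LinearMap.fst _ M N) r).fst = (map (LinearMap.snd _ M N) r).fst by simp,
    fun (a : TrivSqZeroExt _ M) (c : TrivSqZeroExt _ N) (hac : a.fst = c.fst) => ?_⟩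
  refine ⟨(inl a.fst + inr (a.snd, c.snd) : TrivSqZeroExt _ (M × N)), ⟨?_, ?_⟩,
    fun (r : TrivSqZeroExt _ (M × N)) ⟨(hr₁ : map (LinearMap.fst _ M N) r = a),
      (hr₂ : map (LinearMap.snd _ M N) r = c)⟩ => ?_⟩
  · change map (LinearMap.fst _ M N) _ = a
    ext <;> simp
  · change map (LinearMap.snd _ M N) _ = c
    ext <;> simp [hac]
  · subst hr₁ hr₂
    exact TrivSqZeroExt.ext (by simp) (by simp)

end SquareZero

theorem no_hull_of_nontrivial_tangent_action_general {Λ : Type u} [CommRing Λ] [IsLocalRing Λ]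
    (F : ProRepAlg Λ) (Γ : Subgroup (F.carrier ≃ₐ[Λ] F.carrier))
    (hnt : ∃ g ∈ Γ, ¬ ActsTriviallyOnTangent F g) :
    (∀ (K E E2 : ArtAlg Λ) (πE : ArtHom E K) (p1 p2 : ArtHom E2 E),
        maximalIdeal K.carrier = ⊥ → IsDualNumbers E → IsFibreProduct πE πE p1 p2 →
        ¬ Function.Injective (fun d : (quotFunctor F Γ).obj E2 =>
          ((quotFunctor F Γ).map p1 d, (quotFunctor F Γ).map p2 d))) ∧
      ¬ HasHull (quotFunctor F Γ) := by
  refine ⟨fun _ _ _ _ _ _ hK hE hFP => not_injective_quotFunctor_of_isFibreProduct hnt hK hE hFP,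
    fun hHull => ?_⟩
  have hFP := isFibreProduct_trivSqZeroExt (Λ := Λ) (ResidueField Λ) (ResidueField Λ)
  have hK : maximalIdeal (ArtAlg.residueField Λ).carrier = ⊥ :=
    maximalIdeal_eq_bot (R := ResidueField Λ)
  exact not_injective_quotFunctor_of_isFibreProduct hnt hK isDualNumbers_trivSqZeroExt hFP
    (hHull.injective_of_isFibreProduct hFP (isKV_trivSqZeroExt _) (isKV_trivSqZeroExt _)
      (isKV_trivSqZeroExt _))

/-- If `Γ` acts nontrivially on the tangent space `TF`, then
`𝓓 = 𝓕/Γ` fails to have a tangent space: `𝓓(k[ε₁,ε₂]) → 𝓓(k[ε]) × 𝓓(k[ε])`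
(where `k[ε₁,ε₂] = k[ε] ×_k k[ε]`) is not injective; in particular `𝓓` has no hull. -/
theorem no_hull_of_nontrivial_tangent_action {Λ : Type u} [CommRing Λ] [IsLocalRing Λ] [IsNoetherianRing Λ]
    [IsAdicComplete (maximalIdeal Λ) Λ]
    (F : ProRepAlg Λ) (Γ : Subgroup (F.carrier ≃ₐ[Λ] F.carrier))
    (hnt : ∃ g ∈ Γ, ¬ ActsTriviallyOnTangent F g) :
    (∀ (K E E2 : ArtAlg Λ) (πE : ArtHom E K) (p1 p2 : ArtHom E2 E),
        maximalIdeal K.carrier = ⊥ → IsDualNumbers E → IsFibreProduct πE πE p1 p2 →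
        ¬ Function.Injective (fun d : (quotFunctor F Γ).obj E2 =>
          ((quotFunctor F Γ).map p1 d, (quotFunctor F Γ).map p2 d))) ∧
      ¬ HasHull (quotFunctor F Γ) :=
  no_hull_of_nontrivial_tangent_action_general F Γ hnt
end

section
/- Let A be an Artinian local Λ-algebra with residue field k, generated as a Λ-algebra by the images of two local Λ-algebra homomorphisms x, y : F → A from a complete local Λ-algebra F. If x and y induce the same map on cotangent spaces F/(m_F² + m_Λ F) → A/(m_A² + m_Λ A), then both x and y are surjective. -/
/-!
Write `I = m_A² + m_Λ A`. Since `x ≡ y (mod I)`, the elements of `A` congruent modulo `I` to an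
element of `x(F)` form a subalgebra containing both images, so `A = x(F) + I`. As `m_Λ A` lies in
`J = x(m_F) A`, this gives `m_A ⊆ J + m_A²`, and nilpotence of `m_A` forces `m_A = J`. Viewing `A`
as an `F`-module through `x`, we get `A = F·1 + m_F A` with `m_F` acting nilpotently on `A`, and
Nakayama's lemma in its nilpotent form gives `A = F·1`, i.e. `x` is surjective.
-/

open IsLocalRing

namespace Submodule

variable {R M : Type*} [CommRing R] [AddCommGroup M] [Module R M] {I : Ideal R}
  {N N' : Submodule R M}

theorem le_sup_pow_smul_of_le_sup_smul (h : N ≤ N' ⊔ I • N) (k : ℕ) :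
    N ≤ N' ⊔ I ^ k • N := by
  induction k with
  | zero => simp
  | succ k ih =>
    calc N ≤ N' ⊔ I • N := h
      _ ≤ N' ⊔ I • (N' ⊔ I ^ k • N) := by gcongr
      _ ≤ N' ⊔ I ^ (k + 1) • N := by
        rw [smul_sup, pow_succ', mul_smul, ← sup_assoc]
        exact sup_le_sup_right (sup_le le_rfl smul_le_right) _

theorem le_of_le_sup_smul_of_pow_smul_eq_bot (h : N ≤ N' ⊔ I • N) {n : ℕ}
    (hn : I ^ n • N = ⊥) : N ≤ N' := by
  simpa [hn] using le_sup_pow_smul_of_le_sup_smul h n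

end Submodule

theorem Ideal.eq_of_le_sup_sq_of_isNilpotent {A : Type*} [CommRing A] {m J : Ideal A}
    (hm : IsNilpotent m) (hJ : J ≤ m) (h : m ≤ J ⊔ m ^ 2) : m = J := by
  obtain ⟨n, hn⟩ := hm
  refine le_antisymm (Submodule.le_of_le_sup_smul_of_pow_smul_eq_bot (I := m) (n := n) ?_ ?_) hJ
  · rwa [smul_eq_mul, ← sq]
  · rw [hn, Submodule.zero_eq_bot, Submodule.bot_smul]

theorem AlgHom.exists_sub_mem_of_adjoin_range_union_eq_top {R A B : Type*} [CommRing R]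
    [CommRing A] [CommRing B] [Algebra R A] [Algebra R B] {z w : A →ₐ[R] B} {I : Ideal B}
    (hzw : ∀ u, z u - w u ∈ I) (hgen : Algebra.adjoin R (Set.range z ∪ Set.range w) = ⊤)
    (b : B) : ∃ a, b - z a ∈ I := by
  let π := Ideal.Quotient.mkₐ R I
  have hle : Algebra.adjoin R (Set.range z ∪ Set.range w) ≤ ((π.comp z).range).comap π := by
    refine Algebra.adjoin_le (Set.union_subset ?_ ?_)
    · rintro _ ⟨u, rfl⟩
      exact ⟨u, rfl⟩
    · rintro _ ⟨u, rfl⟩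
      exact ⟨u, Ideal.Quotient.eq.2 (hzw u)⟩
  obtain ⟨a, ha⟩ := hle (hgen ▸ Algebra.mem_top : b ∈ _)
  exact ⟨a, Ideal.Quotient.eq.1 ha.symm⟩

theorem AlgHom.map_maximalIdeal_algebraMap_le {Λ F A : Type*} [CommRing Λ] [IsLocalRing Λ]
    [CommRing F] [IsLocalRing F] [Algebra Λ F] [IsLocalHom (algebraMap Λ F)]
    [CommRing A] [Algebra Λ A] (x : F →ₐ[Λ] A) :
    (maximalIdeal Λ).map (algebraMap Λ A) ≤ (maximalIdeal F).map x := by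
  rw [← x.comp_algebraMap, ← Ideal.map_map]
  exact Ideal.map_mono (map_maximalIdeal_le _)

theorem RingHom.surjective_of_forall_sub_mem_sq_sup_map {F A : Type*} [CommRing F]
    [IsLocalRing F] [CommRing A] [IsLocalRing A] (φ : F →+* A) [IsLocalHom φ]
    (hm : IsNilpotent (maximalIdeal A))
    (h : ∀ a, ∃ f, a - φ f ∈ maximalIdeal A ^ 2 ⊔ (maximalIdeal F).map φ) :
    Function.Surjective φ := by
  set J := (maximalIdeal F).map φ
  have hI : maximalIdeal A ^ 2 ⊔ J ≤ maximalIdeal A :=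
    sup_le (Ideal.pow_le_self two_ne_zero) (map_maximalIdeal_le φ)
  have hmJ : maximalIdeal A = J := by
    refine Ideal.eq_of_le_sup_sq_of_isNilpotent hm (map_maximalIdeal_le φ) fun t ht ↦ ?_
    obtain ⟨f, hf⟩ := h t
    have hfm : f ∈ maximalIdeal F := by
      rw [← maximalIdeal_comap φ, Ideal.mem_comap]
      simpa using sub_mem ht (hI hf)
    rw [← add_sub_cancel (φ f) t, sup_comm]
    exact add_mem (Ideal.mem_sup_right (Ideal.mem_map_of_mem φ hfm)) hf
  let := φ.toAlgebra
  obtain ⟨n, hn⟩ := hm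
  have htop : (⊤ : Submodule F A) ≤ 1 ⊔ maximalIdeal F • ⊤ := by
    rw [Ideal.smul_top_eq_map]
    intro a _
    obtain ⟨f, hf⟩ := h a
    rw [← add_sub_cancel (φ f) a]
    exact Submodule.add_mem_sup (Submodule.algebraMap_mem f) (hmJ.le (hI hf))
  have hnil : maximalIdeal F ^ n • (⊤ : Submodule F A) = ⊥ := by
    rw [Ideal.smul_top_eq_map, Ideal.map_pow]
    change (J ^ n).restrictScalars F = ⊥
    rw [← hmJ, hn, Submodule.zero_eq_bot, Submodule.restrictScalars_bot]
  have hone : (⊤ : Submodule F A) ≤ 1 := Submodule.le_of_le_sup_smul_of_pow_smul_eq_bot htop hnil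
  rwa [Submodule.one_eq_range, top_le_iff, LinearMap.range_eq_top] at hone

theorem surjective_of_generating_and_equal_on_cotangent_general
    {Λ F A : Type*} [CommRing Λ] [IsLocalRing Λ]
    [CommRing F] [Algebra Λ F] [IsLocalRing F]
    [IsLocalHom (algebraMap Λ F)]
    [CommRing A] [Algebra Λ A] [IsArtinianRing A] [IsLocalRing A]
    (x y : F →ₐ[Λ] A) (hx : IsLocalHom x.toRingHom) (hy : IsLocalHom y.toRingHom)
    (hgen : Algebra.adjoin Λ (Set.range x ∪ Set.range y) = ⊤)
    (hcot : ∀ z : F,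
      x z - y z ∈ maximalIdeal A ^ 2 ⊔ Ideal.map (algebraMap Λ A) (maximalIdeal Λ)) :
    Function.Surjective x ∧ Function.Surjective y := by
  have hm : IsNilpotent (maximalIdeal A) :=
    (isArtinianRing_iff_isNilpotent_maximalIdeal A).1 ‹_›
  have surj (z w : F →ₐ[Λ] A) (hz : IsLocalHom z.toRingHom)
      (hzw : ∀ u, z u - w u ∈ maximalIdeal A ^ 2 ⊔ (maximalIdeal Λ).map (algebraMap Λ A))
      (hgen : Algebra.adjoin Λ (Set.range z ∪ Set.range w) = ⊤) : Function.Surjective z :=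
    z.toRingHom.surjective_of_forall_sub_mem_sq_sup_map hm fun a ↦
      (z.exists_sub_mem_of_adjoin_range_union_eq_top hzw hgen a).imp fun _ hf ↦
        sup_le_sup_left z.map_maximalIdeal_algebraMap_le _ hf
  refine ⟨surj x y hx hcot hgen, surj y x hy (fun u ↦ ?_) (by rwa [Set.union_comm])⟩
  simpa using neg_mem (hcot u)

/-- Let `A` be an Artinian local `Λ`-algebra with residue field `k`,
generated as a `Λ`-algebra by the images of two local `Λ`-algebra homomorphisms
`x, y : F → A` from a complete local `Λ`-algebra `F`. If `x` and `y` induce the same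
map on cotangent spaces `F/(m_F² + m_Λ F) → A/(m_A² + m_Λ A)`, then both `x` and `y`
are surjective. -/
theorem surjective_of_generating_and_equal_on_cotangent
    {Λ F A : Type*} [CommRing Λ] [IsLocalRing Λ]
    [CommRing F] [Algebra Λ F] [IsLocalRing F] [IsAdicComplete (maximalIdeal F) F]
    [IsLocalHom (algebraMap Λ F)]
    [CommRing A] [Algebra Λ A] [IsArtinianRing A] [IsLocalRing A]
    [IsLocalHom (algebraMap Λ A)]
    (hres : ∀ a : A, ∃ c : Λ, a - algebraMap Λ A c ∈ maximalIdeal A)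
    (x y : F →ₐ[Λ] A) (hx : IsLocalHom x.toRingHom) (hy : IsLocalHom y.toRingHom)
    (hgen : Algebra.adjoin Λ (Set.range x ∪ Set.range y) = ⊤)
    (hcot : ∀ z : F,
      x z - y z ∈ maximalIdeal A ^ 2 ⊔ Ideal.map (algebraMap Λ A) (maximalIdeal Λ)) :
    Function.Surjective x ∧ Function.Surjective y :=
  surjective_of_generating_and_equal_on_cotangent_general x y hx hy hgen hcot
end

section
/- Let 𝓕 = Hom_Λ(F,−) be pro-representable and Γ ⊆ Aut_Λ(F) a subgroup acting trivially on the tangent space TF. Then the quotient map q : 𝓕 → 𝓕/Γ is a hull of 𝓕/Γ: it is formally smooth and bijective on all rings of the form k[V] with V a k-vector space. -/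
open IsLocalRing

universe u v

variable {Λ : Type u} [CommRing Λ] [IsLocalRing Λ]

/-- On a `k[V]`, a local `Λ`-hom `x : F → A` is invariant under precomposition with
an automorphism acting trivially on the tangent space. -/
theorem locHom_comp_eq_of_trivial_tangent {F : ProRepAlg Λ} {A : ArtAlg Λ} (hA : IsKV A)
    (x : LocHom Λ F.carrier A.carrier) (g : F.carrier ≃ₐ[Λ] F.carrier)
    (hg : ActsTriviallyOnTangent F g) (a : F.carrier) : x.1 (g a) = x.1 a := by
  obtain ⟨c, hc⟩ := F.resSurj a
  have hmem := hg _ hc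
  have hdiff : g a - a = g (a - algebraMap Λ F.carrier c) - (a - algebraMap Λ F.carrier c) := by
    simp only [map_sub, AlgEquiv.commutes]
    ring
  have h1 : Ideal.map x.1.toRingHom (maximalIdeal F.carrier) ≤ maximalIdeal A.carrier := by
    rw [Ideal.map_le_iff_le_comap]
    intro y hy
    rw [Ideal.mem_comap, mem_maximalIdeal, mem_nonunits_iff]
    intro hu
    exact (mem_maximalIdeal y).mp hy (x.2.1 y hu)
  have hI : Ideal.map x.1.toRingHom
      (maximalIdeal F.carrier ^ 2 ⊔ Ideal.map (algebraMap Λ F.carrier) (maximalIdeal Λ)) ≤ ⊥ := by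
    rw [Ideal.map_sup, Ideal.map_pow, Ideal.map_map]
    have hcomp : x.1.toRingHom.comp (algebraMap Λ F.carrier) = algebraMap Λ A.carrier :=
      x.1.comp_algebraMap
    rw [hcomp, hA.2, sup_bot_eq, ← hA.1]
    exact pow_le_pow_left' h1 2
  have hz : x.1 (g a - a) = 0 := by
    rw [hdiff]
    have := hI (Ideal.mem_map_of_mem x.1.toRingHom hmem)
    simpa using this
  have : x.1 (g a) - x.1 a = 0 := by rw [← map_sub]; exact hz
  exact sub_eq_zero.mp this

/-- If `Γ ⊆ Aut_Λ(F)` acts trivially on the tangent space, then the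
quotient map `q : 𝓕 → 𝓕/Γ` is a hull of `𝓕/Γ`: formally smooth and bijective on all
rings `k[V]`. -/
theorem quotMap_isHull_of_trivial_tangent_action {Λ : Type u} [CommRing Λ] [IsLocalRing Λ] [IsNoetherianRing Λ]
    [IsAdicComplete (maximalIdeal Λ) Λ]
    (F : ProRepAlg Λ) (Γ : Subgroup (F.carrier ≃ₐ[Λ] F.carrier))
    (htriv : ∀ g ∈ Γ, ActsTriviallyOnTangent F g) :
    FormallySmooth' (quotMap F Γ) ∧
      ∀ A : ArtAlg Λ, IsKV A → Function.Bijective ((quotMap F Γ).app A) := by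
  constructor
  · intro A B π hπ b d hbd
    obtain ⟨x, rfl⟩ := Quotient.exists_rep d
    have : (⟦(hFunctor F).map π x⟧ : Quotient (orbitSetoid F Γ B)) = ⟦b⟧ := hbd.symm
    obtain ⟨g, hg, hgx⟩ := Quotient.exact this
    refine ⟨precompAut g x, ?_, ?_⟩
    · rw [← hgx]
      exact Subtype.ext (AlgHom.ext fun a => rfl)
    · exact Quotient.sound ⟨g⁻¹, Γ.inv_mem hg, Subtype.ext (AlgHom.ext fun a =>
        show x.1 (g (g.symm a)) = x.1 a by rw [g.apply_symm_apply])⟩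
  · intro A hA
    constructor
    · intro u v huv
      obtain ⟨g, hg, rfl⟩ := Quotient.exact huv
      exact Subtype.ext (AlgHom.ext fun a =>
        (locHom_comp_eq_of_trivial_tangent hA u g (htriv g hg) a).symm)
    · exact Quotient.exists_rep
end
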